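/- arXiv:2305.20074 — 2 statements merged into one kernel-verified Lean document; each statement's English description precedes it below -/
import Mathlib

section
/- Let X and Y be finite types and let p be a joint pmf on X × Y whose marginals p_X and p_Y are everywhere positive. Define the normalized joint matrix Q ∈ ℝ^{X × Y} by Q(x, y) = p(x, y) / √(p_X(x) p_Y(y)). Then the operator norm of Q (as a linear map from ℝ^Y to ℝ^X with Euclidean norms) is at most 1; equivalently, every singular value of Q lies in the interval [0, 1], i.e., I − QᵀQ is positive semidefinite. -/
open Finset Matrix

/-- Marginal pmf of the first coordinate of a joint pmf on `X × Y`. -/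
noncomputable def margX {X Y : Type*} [Fintype Y] (p : X × Y → ℝ) (x : X) : ℝ :=
  ∑ y, p (x, y)

/-- Marginal pmf of the second coordinate of a joint pmf on `X × Y`. -/
noncomputable def margY {X Y : Type*} [Fintype X] (p : X × Y → ℝ) (y : Y) : ℝ :=
  ∑ x, p (x, y)

/-- The Euclidean norm of a finitely indexed real vector. -/
noncomputable def euclNorm {n : Type*} [Fintype n] (v : n → ℝ) : ℝ :=
  Real.sqrt (∑ i, v i ^ 2)

/-!
This is Schur's test. With `u y = w y / √p_Y(y)` one has
`(Q w) x = (∑ y, p(x, y) u y) / √p_X(x)`, so Cauchy–Schwarz weighted by the row `p(x, ·)`,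
whose total mass is `p_X(x)`, gives `(Q w) x ^ 2 ≤ ∑ y, p(x, y) u y ^ 2`. Summing over `x`
turns the right side into `∑ y, p_Y(y) u y ^ 2 ≤ ‖w‖²`. Positive semidefiniteness of `1 - QᵀQ`
is the same inequality, as `⟪v, (1 - QᵀQ) v⟫ = ‖v‖² - ‖Q v‖²`.
-/

theorem Finset.sq_sum_mul_le_sum_mul_sum_mul_sq {ι : Type*} (s : Finset ι) {a : ι → ℝ}
    (ha : ∀ i ∈ s, 0 ≤ a i) (u : ι → ℝ) :
    (∑ i ∈ s, a i * u i) ^ 2 ≤ (∑ i ∈ s, a i) * ∑ i ∈ s, a i * u i ^ 2 :=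
  sum_sq_le_sum_mul_sum_of_sq_le_mul s ha (fun i hi => mul_nonneg (ha i hi) (sq_nonneg _))
    fun i _ => le_of_eq (by ring)

theorem Matrix.posSemidef_one_sub_transpose_mul_self {m n : Type*} [Fintype m] [Fintype n]
    [DecidableEq n] (A : Matrix m n ℝ) (hA : ∀ w, ∑ i, (A *ᵥ w) i ^ 2 ≤ ∑ j, w j ^ 2) :
    (1 - Aᵀ * A).PosSemidef := by
  refine .of_dotProduct_mulVec_nonneg ?_ fun v => ?_
  · simpa only [conjTranspose_eq_transpose_of_trivial] using
      isHermitian_one.sub (isHermitian_conjTranspose_mul_self A)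
  · have hquad : v ⬝ᵥ ((1 - Aᵀ * A) *ᵥ v) = ∑ j, v j ^ 2 - ∑ i, (A *ᵥ v) i ^ 2 := by
      rw [sub_mulVec, one_mulVec, dotProduct_sub, ← mulVec_mulVec, dotProduct_mulVec,
        vecMul_transpose]
      simp only [dotProduct, sq]
    simpa only [star_trivial, hquad, sub_nonneg] using hA v

noncomputable def normalizedJoint {X Y : Type*} [Fintype X] [Fintype Y] (p : X × Y → ℝ) :
    Matrix X Y ℝ :=
  of fun x y => p (x, y) / √(margX p x * margY p y)

theorem margX_nonneg {X Y : Type*} [Fintype Y] {p : X × Y → ℝ} (hp : ∀ z, 0 ≤ p z) (x : X) :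
    0 ≤ margX p x :=
  sum_nonneg fun y _ => hp (x, y)

theorem margY_nonneg {X Y : Type*} [Fintype X] {p : X × Y → ℝ} (hp : ∀ z, 0 ≤ p z) (y : Y) :
    0 ≤ margY p y :=
  sum_nonneg fun x _ => hp (x, y)

section

variable {X Y : Type*} [Fintype X] [Fintype Y] {p : X × Y → ℝ}

theorem normalizedJoint_mulVec_apply (hp : ∀ z, 0 ≤ p z) (w : Y → ℝ) (x : X) :
    (normalizedJoint p *ᵥ w) x = (∑ y, p (x, y) * (w y / √(margY p y))) / √(margX p x) := by
  simp only [normalizedJoint, mulVec, dotProduct, of_apply, sum_div,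
    Real.sqrt_mul (margX_nonneg hp x)]
  exact sum_congr rfl fun y _ => by ring

theorem sq_normalizedJoint_mulVec_apply_le (hp : ∀ z, 0 ≤ p z) (w : Y → ℝ) (x : X) :
    (normalizedJoint p *ᵥ w) x ^ 2 ≤ ∑ y, p (x, y) * (w y / √(margY p y)) ^ 2 := by
  rw [normalizedJoint_mulVec_apply hp, div_pow, Real.sq_sqrt (margX_nonneg hp x)]
  refine div_le_of_le_mul₀ (margX_nonneg hp x)
    (sum_nonneg fun y _ => mul_nonneg (hp _) (sq_nonneg _)) ?_
  rw [mul_comm]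
  exact sq_sum_mul_le_sum_mul_sum_mul_sq _ (fun y _ => hp _) _

theorem sum_sq_normalizedJoint_mulVec_le (hp : ∀ z, 0 ≤ p z) (w : Y → ℝ) :
    ∑ x, (normalizedJoint p *ᵥ w) x ^ 2 ≤ ∑ y, w y ^ 2 := by
  calc ∑ x, (normalizedJoint p *ᵥ w) x ^ 2
      ≤ ∑ x, ∑ y, p (x, y) * (w y / √(margY p y)) ^ 2 :=
        sum_le_sum fun x _ => sq_normalizedJoint_mulVec_apply_le hp w x
    _ = ∑ y, margY p y * (w y ^ 2 / margY p y) := by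
        rw [sum_comm]
        refine sum_congr rfl fun y _ => ?_
        rw [← sum_mul, div_pow, Real.sq_sqrt (margY_nonneg hp y)]
        rfl
    _ ≤ ∑ y, w y ^ 2 := sum_le_sum fun y _ => by
        rw [← mul_div_assoc]
        exact div_le_of_le_mul₀ (margY_nonneg hp y) (sq_nonneg _) (mul_comm _ _).le

end

theorem normalized_joint_operator_norm_le_one_general {X Y : Type*} [Fintype X] [Fintype Y]
    [DecidableEq Y]
    (p : X × Y → ℝ) (hp0 : ∀ z, 0 ≤ p z)
    (Q : Matrix X Y ℝ)
    (hQ : ∀ x y, Q x y = p (x, y) / Real.sqrt (margX p x * margY p y)) :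
    (∀ w : Y → ℝ, euclNorm (Q.mulVec w) ≤ euclNorm w) ∧
    ((1 : Matrix Y Y ℝ) - Qᵀ * Q).PosSemidef := by
  obtain rfl : Q = normalizedJoint p := ext hQ
  have hnorm := sum_sq_normalizedJoint_mulVec_le hp0
  exact ⟨fun w => Real.sqrt_le_sqrt (hnorm w),
    posSemidef_one_sub_transpose_mul_self _ hnorm⟩

/-- For a joint pmf `p` on finite `X × Y` with everywhere-positive
marginals, the normalized joint matrix `Q(x,y) = p(x,y)/√(p_X(x) p_Y(y))` has operator
norm at most one (w.r.t. Euclidean norms); equivalently every singular value of `Q`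
lies in `[0, 1]`, i.e. `I − QᵀQ` is positive semidefinite. -/
theorem normalized_joint_operator_norm_le_one {X Y : Type*} [Fintype X] [Fintype Y]
    [DecidableEq Y]
    (p : X × Y → ℝ) (hp0 : ∀ z, 0 ≤ p z) (hp1 : ∑ z : X × Y, p z = 1)
    (hX : ∀ x, 0 < margX p x) (hY : ∀ y, 0 < margY p y)
    (Q : Matrix X Y ℝ)
    (hQ : ∀ x y, Q x y = p (x, y) / Real.sqrt (margX p x * margY p y)) :
    (∀ w : Y → ℝ, euclNorm (Q.mulVec w) ≤ euclNorm w) ∧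
    ((1 : Matrix Y Y ℝ) - Qᵀ * Q).PosSemidef :=
  normalized_joint_operator_norm_le_one_general p hp0 Q hQ
end

section
/- Let X and Y be finite types, p a joint pmf on X × Y with everywhere-positive marginals p_X and p_Y, Q(x, y) = p(x, y) / √(p_X(x) p_Y(y)), with singular values 1 = σ₁ ≥ σ₂ ≥ … in decreasing order, and let K ≤ min(|X|, |Y|). Then there exist whitened feature maps f : X → ℝ^K and g : Y → ℝ^K (i.e., ∑_x p_X(x) f(x) f(x)ᵀ = I_K and ∑_y p_Y(y) g(y) g(y)ᵀ = I_K) whose cross-correlation matrix P = ∑_{x,y} p(x, y) f(x) g(y)ᵀ equals the diagonal matrix diag(σ₁, …, σ_K), so that det(I_K − PᵀP) = ∏_{k=1}^K (1 − σ_k²); such f and g are obtained by taking f_k(x) = u_k(x)/√(p_X(x)) and g_k(y) = v_k(y)/√(p_Y(y)) where (u_k, v_k) are the top K singular vector pairs of Q. -/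
/-!
Let `v₀, v₁, …` be an orthonormal eigenbasis of `Qᵀ Q`, sorted so that the eigenvalues
`σ₀² ≥ σ₁² ≥ …` decrease. Expanding in this basis gives `σᵢ ‖v‖ ≤ ‖Q v‖` on `span (v₀, …, vᵢ)`
and `‖Q v‖ ≤ σᵢ ‖v‖` on `span (vᵢ, vᵢ₊₁, …)`; every `(i + 1)`-dimensional subspace meets the
latter, which is the max-min characterisation of `nthSingularValue Q i`. The vectors `Q vₖ / σₖ`
with `σₖ ≠ 0` are orthonormal; completing them to an orthonormal family `uₖ` gives
`Q vₖ = σₖ uₖ`. Since `p (x, y) = √p_X(x) Q(x, y) √p_Y(y)`, dividing `uₖ` by `√p_X` and `vₖ` by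
`√p_Y` turns orthonormality into whitening and `Uᵀ Q V = diag σ` into the claimed
cross-correlation.
-/

open Finset Matrix

/-- The `i`-th largest singular value (0-indexed, listed with multiplicity in
decreasing order) of a real matrix, via the Courant–Fischer max-min
characterization. -/
noncomputable def nthSingularValue {m n : Type*} [Fintype m] [Fintype n]
    (M : Matrix m n ℝ) (i : ℕ) : ℝ :=
  sSup {t : ℝ | ∃ V : Submodule ℝ (n → ℝ), Module.finrank ℝ ↥V = i + 1 ∧
    ∀ v ∈ V, t * euclNorm v ≤ euclNorm (M.mulVec v)}

open Module InnerProductSpace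

namespace OrthonormalBasis

variable {ι 𝕜 E : Type*} [Fintype ι] [RCLike 𝕜] [NormedAddCommGroup E] [InnerProductSpace 𝕜 E]

theorem finrank_span_image (b : OrthonormalBasis ι 𝕜 E) (s : Finset ι) :
    finrank 𝕜 (Submodule.span 𝕜 (b '' s)) = #s := by
  rw [Set.image_eq_range]
  exact (finrank_span_eq_card
    (b.orthonormal.linearIndependent.comp _ Subtype.val_injective)).trans (by simp)

theorem repr_eq_zero_of_mem_span_image (b : OrthonormalBasis ι 𝕜 E) {s : Set ι} {v : E}
    (hv : v ∈ Submodule.span 𝕜 (b '' s)) {j : ι} (hj : j ∉ s) : b.repr v j = 0 := by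
  rw [b.repr_apply_apply, ← Submodule.mem_orthogonal_singleton_iff_inner_right]
  refine Submodule.span_le.mpr ?_ hv
  rintro _ ⟨i, hi, rfl⟩
  rw [SetLike.mem_coe, Submodule.mem_orthogonal_singleton_iff_inner_right]
  exact b.orthonormal.2 (ne_of_mem_of_not_mem hi hj).symm

theorem norm_sq_eq_sum_repr (b : OrthonormalBasis ι 𝕜 E) (v : E) :
    ‖v‖ ^ 2 = ∑ i, ‖b.repr v i‖ ^ 2 := by
  rw [← b.repr.norm_map, EuclideanSpace.norm_sq_eq]

end OrthonormalBasis

section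

variable {𝕜 E : Type*} [RCLike 𝕜] [NormedAddCommGroup E] [InnerProductSpace 𝕜 E]
  [FiniteDimensional 𝕜 E]

theorem Orthonormal.exists_orthonormal_extension_of_card_le {ι : Type*} [Fintype ι]
    (card_ι : Fintype.card ι ≤ finrank 𝕜 E) {v : ι → E} {s : Set ι}
    (hv : Orthonormal 𝕜 (s.domRestrict v)) :
    ∃ u : ι → E, Orthonormal 𝕜 u ∧ ∀ i ∈ s, u i = v i := by
  classical
  have hv' : Orthonormal 𝕜 ((Sum.inl '' s).domRestrict (Sum.elim v 0 :
      ι ⊕ Fin (finrank 𝕜 E - Fintype.card ι) → E)) := by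
    rw [orthonormal_iff_ite] at hv ⊢
    rintro ⟨_, i, hi, rfl⟩ ⟨_, j, hj, rfl⟩
    simpa [Set.domRestrict_apply, Subtype.ext_iff] using hv ⟨i, hi⟩ ⟨j, hj⟩
  obtain ⟨b, hb⟩ := hv'.exists_orthonormalBasis_extension_of_card_eq (by simp; omega)
  exact ⟨b ∘ Sum.inl, b.orthonormal.comp _ Sum.inl_injective,
    fun i hi => hb _ (Set.mem_image_of_mem _ hi)⟩

end

namespace LinearMap

variable {𝕜 E F : Type*} [RCLike 𝕜]
  [NormedAddCommGroup E] [InnerProductSpace 𝕜 E] [FiniteDimensional 𝕜 E]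
  [NormedAddCommGroup F] [InnerProductSpace 𝕜 F] [FiniteDimensional 𝕜 F]
  (T : E →ₗ[𝕜] F)

noncomputable def rightSingularBasis : OrthonormalBasis (Fin (finrank 𝕜 E)) 𝕜 E :=
  T.isSymmetric_adjoint_comp_self.eigenvectorBasis rfl

theorem inner_apply_rightSingularBasis (i j : Fin (finrank 𝕜 E)) :
    ⟪T (T.rightSingularBasis i), T (T.rightSingularBasis j)⟫_𝕜 =
      if i = j then ((T.singularValues j ^ 2 : ℝ) : 𝕜) else 0 := by
  rw [← adjoint_inner_right, ← comp_apply, rightSingularBasis,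
    T.isSymmetric_adjoint_comp_self.apply_eigenvectorBasis, inner_smul_right,
    orthonormal_iff_ite.mp (OrthonormalBasis.orthonormal _), T.sq_singularValues_fin rfl]
  split_ifs <;> simp

theorem norm_sq_apply_eq_sum (v : E) :
    ‖T v‖ ^ 2 =
      ∑ i : Fin (finrank 𝕜 E), T.singularValues i ^ 2 * ‖T.rightSingularBasis.repr v i‖ ^ 2 := by
  rw [← @inner_self_eq_norm_sq 𝕜, ← adjoint_inner_right, ← comp_apply,
    ← T.rightSingularBasis.repr.inner_map_map, PiLp.inner_apply, map_sum]
  refine Finset.sum_congr rfl fun i _ => ?_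
  rw [rightSingularBasis, T.isSymmetric_adjoint_comp_self.eigenvectorBasis_apply_self_apply,
    T.sq_singularValues_fin rfl, ← smul_eq_mul, inner_smul_right, RCLike.re_ofReal_mul, inner_self_eq_norm_sq]

theorem singularValues_mul_norm_le_of_mem_span {i : Fin (finrank 𝕜 E)} {v : E}
    (hv : v ∈ Submodule.span 𝕜 (T.rightSingularBasis '' Iic i)) :
    T.singularValues i * ‖v‖ ≤ ‖T v‖ := by
  refine le_of_pow_le_pow_left₀ two_ne_zero (norm_nonneg _) ?_
  rw [mul_pow, T.rightSingularBasis.norm_sq_eq_sum_repr, norm_sq_apply_eq_sum, mul_sum]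
  refine sum_le_sum fun j _ => ?_
  by_cases hji : j ≤ i
  · gcongr
    exacts [T.singularValues_nonneg i, T.singularValues_antitone hji]
  · rw [T.rightSingularBasis.repr_eq_zero_of_mem_span_image hv (by simpa using hji)]
    simp

theorem norm_apply_le_of_mem_span {i : Fin (finrank 𝕜 E)} {v : E}
    (hv : v ∈ Submodule.span 𝕜 (T.rightSingularBasis '' Ici i)) :
    ‖T v‖ ≤ T.singularValues i * ‖v‖ := by
  refine le_of_pow_le_pow_left₀ two_ne_zero
    (mul_nonneg (T.singularValues_nonneg i) (norm_nonneg _)) ?_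
  rw [mul_pow, T.rightSingularBasis.norm_sq_eq_sum_repr, norm_sq_apply_eq_sum, mul_sum]
  refine sum_le_sum fun j _ => ?_
  by_cases hij : i ≤ j
  · gcongr
    exacts [T.singularValues_nonneg j, T.singularValues_antitone hij]
  · rw [T.rightSingularBasis.repr_eq_zero_of_mem_span_image hv (by simpa using hij)]
    simp

theorem isGreatest_singularValues (i : Fin (finrank 𝕜 E)) :
    IsGreatest
      {t : ℝ | ∃ V : Submodule 𝕜 E, finrank 𝕜 V = (i : ℕ) + 1 ∧ ∀ v ∈ V, t * ‖v‖ ≤ ‖T v‖}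
      (T.singularValues i) := by
  set b := T.rightSingularBasis
  have hdim : finrank 𝕜 (Submodule.span 𝕜 (b '' Iic i)) = i + 1 := by
    rw [b.finrank_span_image, Fin.card_Iic]
  refine ⟨⟨_, hdim, fun v hv => T.singularValues_mul_norm_le_of_mem_span hv⟩, ?_⟩
  rintro t ⟨V, hV, hle⟩
  let W := Submodule.span 𝕜 (b '' Ici i)
  have hW : finrank 𝕜 W = finrank 𝕜 E - i := by rw [b.finrank_span_image, Fin.card_Ici]
  obtain ⟨w, ⟨hwV, hwW⟩, hw0⟩ : ∃ w ∈ V ⊓ W, w ≠ 0 := by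
    refine Submodule.exists_mem_ne_zero_of_ne_bot fun hVW => ?_
    have := Submodule.finrank_add_finrank_le_of_disjoint (disjoint_iff.mpr hVW)
    omega
  refine le_of_mul_le_mul_right ?_ (norm_pos_iff.mpr hw0)
  exact (hle w hwV).trans (T.norm_apply_le_of_mem_span hwW)

theorem sSup_eq_singularValues (i : ℕ) :
    sSup {t : ℝ | ∃ V : Submodule 𝕜 E, finrank 𝕜 V = i + 1 ∧ ∀ v ∈ V, t * ‖v‖ ≤ ‖T v‖} =
      T.singularValues i := by
  by_cases hi : i < finrank 𝕜 E
  · exact (T.isGreatest_singularValues ⟨i, hi⟩).csSup_eq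
  · -- no subspace has dimension `i + 1`, and `sSup ∅ = 0` in `ℝ`
    rw [T.singularValues_of_finrank_le (not_lt.mp hi), ← Real.sSup_empty]
    congr
    refine Set.eq_empty_of_forall_notMem fun t ⟨V, hV, _⟩ => ?_
    have := Submodule.finrank_le V
    omega

theorem exists_orthonormal_singular_pairs {K : ℕ} (hKE : K ≤ finrank 𝕜 E)
    (hKF : K ≤ finrank 𝕜 F) :
    ∃ (u : Fin K → F) (v : Fin K → E), Orthonormal 𝕜 u ∧ Orthonormal 𝕜 v ∧
      ∀ k, T (v k) = (T.singularValues k : 𝕜) • u k := by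
  classical
  let v := fun k : Fin K => T.rightSingularBasis (Fin.castLE hKE k)
  have hTv (k l : Fin K) : ⟪T (v k), T (v l)⟫_𝕜 =
      if k = l then ((T.singularValues l ^ 2 : ℝ) : 𝕜) else 0 := by
    simp [v, inner_apply_rightSingularBasis, Fin.castLE_inj]
  let s : Set (Fin K) := {k | T.singularValues k ≠ 0}
  have hs : Orthonormal 𝕜 (s.domRestrict fun k => ((T.singularValues k : 𝕜)⁻¹) • T (v k)) := by
    rw [orthonormal_iff_ite]
    rintro ⟨k, hk⟩ ⟨l, hl⟩
    simp only [Set.domRestrict_apply, inner_smul_left, inner_smul_right, hTv, Subtype.mk.injEq,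
      map_inv₀, RCLike.conj_ofReal]
    split_ifs with hkl
    · subst hkl
      have hk' : (T.singularValues k : 𝕜) ≠ 0 := mod_cast hk
      push_cast
      field_simp
    · simp
  obtain ⟨u, hu, hus⟩ :=
    hs.exists_orthonormal_extension_of_card_le (by simpa using hKF)
  refine ⟨u, v, hu, T.rightSingularBasis.orthonormal.comp _ (Fin.castLE_injective hKE),
    fun k => ?_⟩
  by_cases hk : T.singularValues k = 0
  · rw [hk, RCLike.ofReal_zero, zero_smul, ← inner_self_eq_zero (𝕜 := 𝕜), hTv, if_pos rfl, hk]
    simp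
  · rw [hus k hk, smul_smul, mul_inv_cancel₀ (by exact_mod_cast hk), one_smul]

end LinearMap

theorem euclNorm_ofLp {n : Type*} [Fintype n] (v : EuclideanSpace ℝ n) :
    euclNorm v.ofLp = ‖v‖ := by
  simp [euclNorm, EuclideanSpace.norm_eq]

namespace Matrix

theorem smul_vecMulVec_inv_smul {m n : Type*} {a b : ℝ} (ha : a ≠ 0) (hb : b ≠ 0) (c : ℝ)
    (u : m → ℝ) (w : n → ℝ) :
    (a * c * b) • vecMulVec (a⁻¹ • u) (b⁻¹ • w) = c • vecMulVec u w := by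
  rw [smul_vecMulVec, vecMulVec_smul, smul_smul, smul_smul]
  congr 1
  field_simp

variable {m n o : Type*} [Fintype m] [Fintype n]

theorem nthSingularValue_eq_singularValues [DecidableEq n] (M : Matrix m n ℝ) (i : ℕ) :
    nthSingularValue M i = (toEuclideanLin M).singularValues i := by
  let e := WithLp.linearEquiv 2 ℝ (n → ℝ)
  rw [nthSingularValue, ← LinearMap.sSup_eq_singularValues]
  congr 1
  ext t
  constructor
  · rintro ⟨V, hV, hle⟩
    refine ⟨V.map e.symm.toLinearMap, by rw [LinearEquiv.finrank_map_eq, hV], fun v hv => ?_⟩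
    simpa [← euclNorm_ofLp, e] using hle _ (V.mem_map_equiv.mp hv)
  · rintro ⟨V, hV, hle⟩
    refine ⟨V.map e.toLinearMap, by rw [LinearEquiv.finrank_map_eq, hV], fun v hv => ?_⟩
    simpa [← euclNorm_ofLp, e] using hle _ (V.mem_map_equiv.mp hv)

theorem transpose_mul_self_of_orthonormal {ι : Type*} [Fintype ι] [DecidableEq ι]
    {u : ι → EuclideanSpace ℝ m} (hu : Orthonormal ℝ u) :
    (of fun x k => u k x)ᵀ * of (fun x k => u k x) = 1 := by
  ext k l
  rw [one_apply, ← orthonormal_iff_ite.mp hu k l, mul_apply, PiLp.inner_apply]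
  simp [mul_comm]

theorem exists_truncatedSVD [DecidableEq n] (M : Matrix m n ℝ) {K : ℕ}
    (hKm : K ≤ Fintype.card m) (hKn : K ≤ Fintype.card n) :
    ∃ (U : Matrix m (Fin K) ℝ) (V : Matrix n (Fin K) ℝ), Uᵀ * U = 1 ∧ Vᵀ * V = 1 ∧
      M * V = U * diagonal fun k : Fin K => nthSingularValue M k := by
  obtain ⟨u, v, hu, hv, huv⟩ := (toEuclideanLin M).exists_orthonormal_singular_pairs
    (by simpa using hKn) (by simpa using hKm)
  refine ⟨of fun x k => u k x, of fun y k => v k y, transpose_mul_self_of_orthonormal hu,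
    transpose_mul_self_of_orthonormal hv, ?_⟩
  ext x k
  have := congrArg (fun w : EuclideanSpace ℝ m => w x) (huv k)
  simp only [toLpLin_apply, PiLp.smul_apply, RCLike.ofReal_real_eq_id, id, smul_eq_mul] at this
  rw [mul_diagonal, nthSingularValue_eq_singularValues, mul_comm]
  exact this

theorem sum_vecMulVec_eq_transpose_mul {α : Type*} [CommSemiring α] (A B : Matrix m o α) :
    ∑ x, vecMulVec (A x) (B x) = Aᵀ * B := by
  ext k l
  simp [sum_apply, vecMulVec_apply, mul_apply]

theorem sum_sum_smul_vecMulVec_eq {α : Type*} [CommSemiring α] (M : Matrix m n α)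
    (A : Matrix m o α) (B : Matrix n o α) :
    ∑ x, ∑ y, M x y • vecMulVec (A x) (B y) = Aᵀ * M * B := by
  ext k l
  simp only [sum_apply, smul_apply, vecMulVec_apply, mul_apply, transpose_apply, smul_eq_mul,
    Finset.sum_mul]
  rw [Finset.sum_comm]
  exact Finset.sum_congr rfl fun y _ => Finset.sum_congr rfl fun x _ => by ring

theorem sum_smul_vecMulVec_inv_sqrt_smul {w : m → ℝ} (hw : ∀ x, 0 < w x)
    (A B : Matrix m o ℝ) :
    ∑ x, w x • vecMulVec ((√(w x))⁻¹ • A x) ((√(w x))⁻¹ • B x) = Aᵀ * B := by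
  refine (Finset.sum_congr rfl fun x _ => ?_).trans (sum_vecMulVec_eq_transpose_mul A B)
  have hsqrt : √(w x) ≠ 0 := (Real.sqrt_pos.mpr (hw x)).ne'
  nth_rewrite 1 [← Real.mul_self_sqrt (hw x).le, ← mul_one √(w x)]
  rw [smul_vecMulVec_inv_smul hsqrt hsqrt, one_smul]

theorem sum_sum_smul_vecMulVec_inv_smul {a : m → ℝ} {b : n → ℝ} (ha : ∀ x, a x ≠ 0)
    (hb : ∀ y, b y ≠ 0) (M : Matrix m n ℝ) (A : Matrix m o ℝ) (B : Matrix n o ℝ) :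
    ∑ x, ∑ y, (a x * M x y * b y) • vecMulVec ((a x)⁻¹ • A x) ((b y)⁻¹ • B y) =
      Aᵀ * M * B := by
  simp_rw [smul_vecMulVec_inv_smul (ha _) (hb _)]
  exact sum_sum_smul_vecMulVec_eq M A B

end Matrix

theorem fmca_objective_attained_general {X Y : Type*} [Fintype X] [Fintype Y] {K : ℕ}
    (p : X × Y → ℝ)
    (hX : ∀ x, 0 < margX p x) (hY : ∀ y, 0 < margY p y)
    (Q : Matrix X Y ℝ)
    (hQ : ∀ x y, Q x y = p (x, y) / Real.sqrt (margX p x * margY p y))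
    (hK : K ≤ min (Fintype.card X) (Fintype.card Y)) :
    ∃ f : X → Fin K → ℝ, ∃ g : Y → Fin K → ℝ,
      (∑ x, margX p x • vecMulVec (f x) (f x) = (1 : Matrix (Fin K) (Fin K) ℝ)) ∧
      (∑ y, margY p y • vecMulVec (g y) (g y) = (1 : Matrix (Fin K) (Fin K) ℝ)) ∧
      (∑ x, ∑ y, p (x, y) • vecMulVec (f x) (g y) =
        Matrix.diagonal fun k : Fin K => nthSingularValue Q (k : ℕ)) ∧
      ((1 : Matrix (Fin K) (Fin K) ℝ) -
          (Matrix.diagonal fun k : Fin K => nthSingularValue Q (k : ℕ))ᵀ *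
            (Matrix.diagonal fun k : Fin K => nthSingularValue Q (k : ℕ))).det =
        ∏ k ∈ Finset.range K, (1 - nthSingularValue Q k ^ 2) := by
  classical
  obtain ⟨U, V, hU, hV, hQV⟩ :=
    Q.exists_truncatedSVD (hK.trans (min_le_left _ _)) (hK.trans (min_le_right _ _))
  have hsqrtX (x : X) : √(margX p x) ≠ 0 := (Real.sqrt_pos.mpr (hX x)).ne'
  have hsqrtY (y : Y) : √(margY p y) ≠ 0 := (Real.sqrt_pos.mpr (hY y)).ne'
  have hp (x : X) (y : Y) : p (x, y) = √(margX p x) * Q x y * √(margY p y) := by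
    rw [hQ, Real.sqrt_mul (hX x).le]
    field_simp [hsqrtX x, hsqrtY y]
  refine ⟨fun x => (√(margX p x))⁻¹ • U x, fun y => (√(margY p y))⁻¹ • V y,
    by rw [sum_smul_vecMulVec_inv_sqrt_smul hX, hU],
    by rw [sum_smul_vecMulVec_inv_sqrt_smul hY, hV], ?_, ?_⟩
  · simp_rw [hp]
    rw [sum_sum_smul_vecMulVec_inv_smul hsqrtX hsqrtY, Matrix.mul_assoc, hQV,
      ← Matrix.mul_assoc, hU, Matrix.one_mul]
  · rw [diagonal_transpose, diagonal_mul_diagonal, ← diagonal_one, diagonal_sub, det_diagonal,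
      ← Fin.prod_univ_eq_prod_range]
    simp only [sq]

/-- attainment of the FMCA optimum, Proposition 2. For
`K ≤ min(|X|, |Y|)` there exist whitened feature maps `f : X → ℝ^K`, `g : Y → ℝ^K`
(obtained from the top `K` singular vector pairs of `Q` rescaled by `1/√p_X`,
`1/√p_Y`) whose cross-correlation matrix `P` equals `diag(σ₁, …, σ_K)`, so that
`det(I_K − PᵀP) = ∏_{k=1}^K (1 − σₖ²)`. -/
theorem fmca_objective_attained {X Y : Type*} [Fintype X] [Fintype Y] {K : ℕ}
    (p : X × Y → ℝ) (hp0 : ∀ z, 0 ≤ p z) (hp1 : ∑ z : X × Y, p z = 1)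
    (hX : ∀ x, 0 < margX p x) (hY : ∀ y, 0 < margY p y)
    (Q : Matrix X Y ℝ)
    (hQ : ∀ x y, Q x y = p (x, y) / Real.sqrt (margX p x * margY p y))
    (hK : K ≤ min (Fintype.card X) (Fintype.card Y)) :
    ∃ f : X → Fin K → ℝ, ∃ g : Y → Fin K → ℝ,
      (∑ x, margX p x • vecMulVec (f x) (f x) = (1 : Matrix (Fin K) (Fin K) ℝ)) ∧
      (∑ y, margY p y • vecMulVec (g y) (g y) = (1 : Matrix (Fin K) (Fin K) ℝ)) ∧
      (∑ x, ∑ y, p (x, y) • vecMulVec (f x) (g y) =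
        Matrix.diagonal fun k : Fin K => nthSingularValue Q (k : ℕ)) ∧
      ((1 : Matrix (Fin K) (Fin K) ℝ) -
          (Matrix.diagonal fun k : Fin K => nthSingularValue Q (k : ℕ))ᵀ *
            (Matrix.diagonal fun k : Fin K => nthSingularValue Q (k : ℕ))).det =
        ∏ k ∈ Finset.range K, (1 - nthSingularValue Q k ^ 2) :=
  fmca_objective_attained_general p hX hY Q hQ hK
end
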